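/- For every s ∈ ℤ, the linear map θ_s on 𝔫𝔴̂_{k,b} determined by θ_s(J⁺_n) = J⁺_{n+s}, θ_s(J⁻_n) = J⁻_{n−s}, θ_s(J_n) = J_n, θ_s(T_n) = T_n − is(k/2) δ_{n,0} K, θ_s(K) = K is a Lie algebra automorphism (the spectral flow automorphism), and θ_s ∘ θ_t = θ_{s+t} for all s, t ∈ ℤ. -/

import Mathlib

/-!
The affine Nappi–Witten algebra `𝔫𝔴̂_{k,b}`, for `k ∈ ℝ \ {0}` and `b ∈ ℝ`: the
complex vector space with basis `{J⁺_n, J⁻_n, J_n, T_n : n ∈ ℤ} ∪ {K}` (modelled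
as finitely supported functions on the type `Gen` of basis symbols), with the
bilinear bracket determined by `[J⁺_m, J⁻_n] = 2iT_{m+n} + km δ_{m+n,0} K`,
`[J_m, J⁺_n] = iJ⁺_{m+n}`, `[J_m, J⁻_n] = −iJ⁻_{m+n}`, `[J_m, T_n] = (k/2)m δ_{m+n,0} K`,
`[J_m, J_n] = (kb/2)m δ_{m+n,0} K`, `K` central, all other brackets of basis elements zero.
-/

/-- Basis symbols of the affine Nappi–Witten algebra. -/
inductive Gen : Type
  | Jp : ℤ → Gen
  | Jm : ℤ → Gen
  | J : ℤ → Gen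
  | T : ℤ → Gen
  | K : Gen
  deriving DecidableEq

/-- The underlying vector space of `𝔫𝔴̂_{k,b}`: formal finite ℂ-linear
combinations of the basis symbols. -/
abbrev ANW : Type := Gen →₀ ℂ

/-- The basis vector corresponding to a basis symbol. -/
noncomputable def e (g : Gen) : ANW := Finsupp.single g 1

/-- The bracket on basis symbols (antisymmetrized as indicated in the paper). -/
noncomputable def genBracket (k b : ℝ) : Gen → Gen → ANW
  | Gen.Jp m, Gen.Jm n =>
      (2 * Complex.I) • e (Gen.T (m + n)) +
        (if m + n = 0 then ((k : ℂ) * (m : ℂ)) • e Gen.K else 0)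
  | Gen.Jm m, Gen.Jp n =>
      -((2 * Complex.I) • e (Gen.T (m + n)) +
        (if m + n = 0 then ((k : ℂ) * (n : ℂ)) • e Gen.K else 0))
  | Gen.J m, Gen.Jp n => Complex.I • e (Gen.Jp (m + n))
  | Gen.Jp m, Gen.J n => -(Complex.I • e (Gen.Jp (m + n)))
  | Gen.J m, Gen.Jm n => (-Complex.I) • e (Gen.Jm (m + n))
  | Gen.Jm m, Gen.J n => Complex.I • e (Gen.Jm (m + n))
  | Gen.J m, Gen.T n => if m + n = 0 then (((k / 2 : ℝ) : ℂ) * (m : ℂ)) • e Gen.K else 0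
  | Gen.T m, Gen.J n => if m + n = 0 then -((((k / 2 : ℝ) : ℂ) * (n : ℂ)) • e Gen.K) else 0
  | Gen.J m, Gen.J n => if m + n = 0 then (((k * b / 2 : ℝ) : ℂ) * (m : ℂ)) • e Gen.K else 0
  | _, _ => 0

/-- The bilinear extension of `genBracket` to all of `𝔫𝔴̂_{k,b}`. -/
noncomputable def affBracket (k b : ℝ) (u v : ANW) : ANW :=
  u.sum fun g₁ c₁ => v.sum fun g₂ c₂ => (c₁ * c₂) • genBracket k b g₁ g₂


/-- The spectral flow `θ_s` on basis symbols:
`J⁺_n ↦ J⁺_{n+s}`, `J⁻_n ↦ J⁻_{n−s}`, `J_n ↦ J_n`,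
`T_n ↦ T_n − is(k/2) δ_{n,0} K`, `K ↦ K`. -/
noncomputable def genFlow (k : ℝ) (s : ℤ) : Gen → ANW
  | Gen.Jp n => e (Gen.Jp (n + s))
  | Gen.Jm n => e (Gen.Jm (n - s))
  | Gen.J n => e (Gen.J n)
  | Gen.T n =>
      e (Gen.T n) - (if n = 0 then (Complex.I * (s : ℂ) * ((k : ℂ) / 2)) • e Gen.K else 0)
  | Gen.K => e Gen.K

/-- The linear extension of `genFlow` to all of `𝔫𝔴̂_{k,b}`. -/
noncomputable def flow (k : ℝ) (s : ℤ) (u : ANW) : ANW :=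
  u.sum fun g c => c • genFlow k s g

/-!
Both `θ_s` and the bracket are (bi)linear extensions of maps defined on basis symbols, so it is
enough to check the bracket relation on pairs of basis vectors and the composition law on single
basis vectors. Apart from index shifts, the only nontrivial case is `[J⁺_m, J⁻_n]` with `m + n = 0`:
the central term `k m K` becomes `k (m + s) K` after the flow, and the difference `k s K` is exactly
what the correction `−i s (k/2) K` in `θ_s(T_0)` contributes after multiplication by `2i`.
Bijectivity follows from `θ_s ∘ θ_{−s} = θ_0 = id`.
-/

open Finsupp

section SpectralFlow

variable (k b : ℝ) (s : ℤ)

noncomputable def flowₗ : ANW →ₗ[ℂ] ANW :=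
  linearCombination ℂ (genFlow k s)

noncomputable def bracketₗ : ANW →ₗ[ℂ] ANW →ₗ[ℂ] ANW :=
  linearCombination ℂ fun g => linearCombination ℂ (genBracket k b g)

theorem coe_flowₗ : ⇑(flowₗ k s) = flow k s := rfl

theorem bracketₗ_apply (u v : ANW) : bracketₗ k b u v = affBracket k b u v := by
  simp only [bracketₗ, affBracket, linearCombination_apply, LinearMap.sum_apply, Finsupp.sum,
    LinearMap.smul_apply, Finset.smul_sum, smul_smul]

theorem basisSingleOne_apply_eq_e (g : Gen) : Finsupp.basisSingleOne g = e g := by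
  rw [Finsupp.coe_basisSingleOne]; rfl

@[simp]
theorem flowₗ_e (g : Gen) : flowₗ k s (e g) = genFlow k s g := by
  simp [flowₗ, e]

@[simp]
theorem bracketₗ_e_e (g₁ g₂ : Gen) : bracketₗ k b (e g₁) (e g₂) = genBracket k b g₁ g₂ := by
  simp [bracketₗ, e]

theorem bracketₗ_e_K : bracketₗ k b (e Gen.K) = 0 :=
  Finsupp.basisSingleOne.ext fun g => by simp [basisSingleOne_apply_eq_e, genBracket]

theorem bracketₗ_apply_e_K (u : ANW) : bracketₗ k b u (e Gen.K) = 0 := by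
  suffices (bracketₗ k b).flip (e Gen.K) = 0 from LinearMap.congr_fun this u
  refine Finsupp.basisSingleOne.ext fun g => ?_
  cases g <;> simp [basisSingleOne_apply_eq_e, genBracket]

theorem ite_smul_eq_ite_zero_smul (P : Prop) [Decidable P] (c : ℂ) (u : ANW) :
    (if P then c • u else 0) = (if P then c else 0) • u := by
  split_ifs <;> simp

theorem flowₗ_genFlow (t : ℤ) (g : Gen) : flowₗ k s (genFlow k t g) = genFlow k (s + t) g := by
  cases g with
  | Jp n => simp [genFlow, add_assoc, add_comm t]
  | Jm n => simp [genFlow, sub_sub, add_comm t]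
  | J n => simp [genFlow]
  | T n =>
    by_cases hn : n = 0
    · simp only [genFlow, hn, if_true, map_sub, map_smul, flowₗ_e, sub_sub, ← add_smul]
      congr 2
      push_cast
      ring
    · simp [genFlow, hn]
  | K => simp [genFlow]

theorem flowₗ_genBracket (g₁ g₂ : Gen) :
    flowₗ k s (genBracket k b g₁ g₂) = bracketₗ k b (genFlow k s g₁) (genFlow k s g₂) := by
  cases g₁ <;> cases g₂ <;>
    simp only [genBracket, genFlow, ← neg_smul, ite_smul_eq_ite_zero_smul, map_add, map_sub,
      map_neg, map_smul, map_zero, flowₗ_e, bracketₗ_e_e, bracketₗ_e_K, bracketₗ_apply_e_K,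
      LinearMap.sub_apply, LinearMap.zero_apply, smul_zero, sub_zero]
  case Jp.Jm m n =>
    rw [add_add_sub_cancel]
    split_ifs
    · match_scalars
      · ring
      · linear_combination (-(k : ℂ) * s) * Complex.I_sq
    · simp
  case Jm.Jp m n =>
    rw [sub_add_add_cancel]
    split_ifs
    · match_scalars
      · ring
      · linear_combination ((k : ℂ) * s) * Complex.I_sq
    · simp
  all_goals congr 3; ring

theorem flowₗ_comp_flowₗ (t : ℤ) : flowₗ k s ∘ₗ flowₗ k t = flowₗ k (s + t) :=
  Finsupp.basisSingleOne.ext fun g => by simp [basisSingleOne_apply_eq_e, flowₗ_genFlow]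

theorem flowₗ_zero : flowₗ k 0 = LinearMap.id :=
  Finsupp.basisSingleOne.ext fun g => by cases g <;> simp [basisSingleOne_apply_eq_e, genFlow]

theorem compr₂_flowₗ_bracketₗ :
    (bracketₗ k b).compr₂ (flowₗ k s) = (bracketₗ k b).compl₁₂ (flowₗ k s) (flowₗ k s) :=
  LinearMap.ext_basis Finsupp.basisSingleOne Finsupp.basisSingleOne fun g₁ g₂ => by
    simp [basisSingleOne_apply_eq_e, flowₗ_genBracket]

noncomputable def flowEquiv : ANW ≃ₗ[ℂ] ANW :=
  .ofLinearMap (f := flowₗ k s) (g := flowₗ k (-s))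
    (by rw [flowₗ_comp_flowₗ, add_neg_cancel, flowₗ_zero])
    (by rw [flowₗ_comp_flowₗ, neg_add_cancel, flowₗ_zero])

end SpectralFlow

theorem spectral_flow_automorphism_general (k b : ℝ) (s : ℤ) :
    (∀ u v : ANW, flow k s (u + v) = flow k s u + flow k s v) ∧
    (∀ (c : ℂ) (u : ANW), flow k s (c • u) = c • flow k s u) ∧
    Function.Bijective (flow k s) ∧
    (∀ u v : ANW, flow k s (affBracket k b u v) = affBracket k b (flow k s u) (flow k s v)) ∧
    (∀ (t : ℤ) (u : ANW), flow k s (flow k t u) = flow k (s + t) u) := by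
  simp only [← coe_flowₗ, ← bracketₗ_apply]
  refine ⟨map_add _, map_smul _, (flowEquiv k s).bijective, fun u v => ?_, fun t u => ?_⟩
  · exact LinearMap.congr_fun₂ (compr₂_flowₗ_bracketₗ k b s) u v
  · rw [← flowₗ_comp_flowₗ, LinearMap.comp_apply]

/-- For every `s ∈ ℤ`, the spectral flow `θ_s` is a Lie algebra automorphism of
`𝔫𝔴̂_{k,b}` (linear, bijective, bracket preserving), and `θ_s ∘ θ_t = θ_{s+t}`
for all `s, t ∈ ℤ`. -/
theorem spectral_flow_automorphism (k b : ℝ) (hk : k ≠ 0) (s : ℤ) :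
    (∀ u v : ANW, flow k s (u + v) = flow k s u + flow k s v) ∧
    (∀ (c : ℂ) (u : ANW), flow k s (c • u) = c • flow k s u) ∧
    Function.Bijective (flow k s) ∧
    (∀ u v : ANW, flow k s (affBracket k b u v) = affBracket k b (flow k s u) (flow k s v)) ∧
    (∀ (t : ℤ) (u : ANW), flow k s (flow k t u) = flow k (s + t) u) :=
  spectral_flow_automorphism_general k b s
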